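/- Let U ⊆ ℝ⁴ be open and u : U → ℝ be twice continuously differentiable, and suppose σ₂(A_u(x)) ≠ 0 for every x ∈ U. Let S = {x ∈ U : ∇u(x) = 0}. Then the 3-dimensional Hausdorff measure of S is zero and the 4-dimensional Hausdorff measure of S is zero. -/

import Mathlib

open MeasureTheory Filter Topology Asymptotics Finset
open scoped ENNReal NNReal

noncomputable section

/-- Identify `ℝ⁴` with `EuclideanSpace ℝ (Fin 4)`. -/
abbrev E4 : Type := EuclideanSpace ℝ (Fin 4)

/-- Partial derivative `∂ᵢ f` in the `i`-th coordinate direction. -/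
def pd (i : Fin 4) (f : E4 → ℝ) (x : E4) : ℝ :=
  fderiv ℝ f x (EuclideanSpace.single i 1)

/-- `σ₁(M) = tr M`. -/
def sigma1 {n : ℕ} (M : Matrix (Fin n) (Fin n) ℝ) : ℝ := M.trace

/-- `σ₂(M) = ((tr M)² − tr (M²))/2`. -/
def sigma2 {n : ℕ} (M : Matrix (Fin n) (Fin n) ℝ) : ℝ :=
  (M.trace ^ 2 - (M * M).trace) / 2

/-- The conformal Schouten matrix of `u`:
`(A_u)_{ij} = −∂ᵢ∂ⱼu + ∂ᵢu ∂ⱼu − (1/2)|∇u|² δᵢⱼ`. -/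
def schouten (u : E4 → ℝ) (x : E4) : Matrix (Fin 4) (Fin 4) ℝ :=
  Matrix.of fun i j =>
    -(pd i (pd j u) x) + pd i u x * pd j u x
      - (1 / 2) * (∑ k, pd k u x ^ 2) * (if i = j then 1 else 0)

/-!
At a critical point `x₀` the Schouten matrix is minus the Hessian, and `σ₂` of a matrix is half
the sum of its principal `2 × 2` minors, so `σ₂(A_u(x₀)) ≠ 0` gives indices `i, j` with
`∂ᵢ∂ᵢu ∂ⱼ∂ⱼu − ∂ᵢ∂ⱼu ∂ⱼ∂ᵢu ≠ 0`. Then `x ↦ (∂ᵢu, ∂ⱼu)` is a submersion at `x₀`, and by the implicit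
function theorem its level set through `x₀`, which contains the critical set near `x₀`, is locally
a Lipschitz image of a `2`-dimensional space. Hence the critical set has Hausdorff dimension at
most `2 < 3`.
-/

open Module

section

variable {E F : Type*} [NormedAddCommGroup E] [NormedSpace ℝ E] [FiniteDimensional ℝ E]
  [NormedAddCommGroup F] [NormedSpace ℝ F] [FiniteDimensional ℝ F]

theorem HasStrictFDerivAt.exists_mem_nhds_dimH_preimage_inter_le {f : E → F} {f' : E →L[ℝ] F}
    {a : E} (hf : HasStrictFDerivAt f f' a) (hf' : f'.range = ⊤) :
    ∃ W ∈ 𝓝 a, dimH (f ⁻¹' {f a} ∩ W) ≤ (finrank ℝ E - finrank ℝ F : ℕ) := by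
  set φ := hf.implicitToOpenPartialHomeomorph f f' hf'
  set g := hf.implicitFunction f f' hf' (f a)
  obtain ⟨K, t, ht, hg⟩ := (hf.to_implicitFunction hf').exists_lipschitzOnWith
  have hφ : ContinuousAt (fun x => (φ x).2) a :=
    continuousAt_snd.comp (φ.continuousAt (hf.mem_implicitToOpenPartialHomeomorph_source hf'))
  have ht' : t ∈ 𝓝 (φ a).2 := by simpa [φ] using ht
  refine ⟨{x | hf.implicitFunction f f' hf' (f x) (φ x).2 = x} ∩ (fun x => (φ x).2) ⁻¹' t,
    inter_mem (hf.eq_implicitFunction hf') (hφ.preimage_mem_nhds ht'), ?_⟩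
  have hsub : f ⁻¹' {f a} ∩ ({x | hf.implicitFunction f f' hf' (f x) (φ x).2 = x} ∩
      (fun x => (φ x).2) ⁻¹' t) ⊆ g '' t := by
    rintro x ⟨hfx, hx, hxt⟩
    have hx : hf.implicitFunction f f' hf' (f x) (φ x).2 = x := hx
    rw [show f x = f a from hfx] at hx
    exact ⟨(φ x).2, hxt, hx⟩
  have hker : finrank ℝ f'.ker = finrank ℝ E - finrank ℝ F := by
    have := LinearMap.finrank_range_add_finrank_ker (f' : E →ₗ[ℝ] F)
    rw [hf', finrank_top] at this
    omega
  calc dimH _ ≤ dimH (g '' t) := dimH_mono hsub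
    _ ≤ dimH t := hg.dimH_image_le
    _ ≤ dimH (Set.univ : Set f'.ker) := dimH_mono (Set.subset_univ t)
    _ = _ := by rw [Real.dimH_univ_eq_finrank, hker]

theorem dimH_le_of_forall_exists_mem_nhds {X : Type*} [EMetricSpace X] [SecondCountableTopology X]
    {s : Set X} {d : ℝ≥0∞} (h : ∀ x ∈ s, ∃ W ∈ 𝓝 x, dimH (s ∩ W) ≤ d) : dimH s ≤ d := by
  by_contra! hlt
  obtain ⟨x, hxs, hx⟩ := exists_mem_nhdsWithin_lt_dimH_of_lt_dimH hlt
  obtain ⟨W, hW, hdW⟩ := h x hxs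
  exact (hx _ (inter_mem self_mem_nhdsWithin (mem_nhdsWithin_of_mem_nhds hW))).not_ge hdW

end

/-- Cramer's rule for the `2 × 2` system `ℓ₁ x = p`, `ℓ₂ x = q` with `x ∈ span {v, w}`. -/
theorem LinearMap.range_prod_eq_top_of_det_ne_zero {𝕜 M : Type*} [Field 𝕜] [AddCommGroup M]
    [Module 𝕜 M] {ℓ₁ ℓ₂ : M →ₗ[𝕜] 𝕜} {v w : M} (h : ℓ₁ v * ℓ₂ w - ℓ₁ w * ℓ₂ v ≠ 0) :
    (ℓ₁.prod ℓ₂).range = ⊤ := by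
  refine LinearMap.range_eq_top.mpr fun ⟨p, q⟩ => ⟨(ℓ₁ v * ℓ₂ w - ℓ₁ w * ℓ₂ v)⁻¹ •
    ((p * ℓ₂ w - q * ℓ₁ w) • v + (q * ℓ₁ v - p * ℓ₂ v) • w), ?_⟩
  ext <;> simp only [map_add, map_smul, LinearMap.prod_apply, Function.prod, Prod.fst_add,
    Prod.snd_add, Prod.smul_fst, Prod.smul_snd, smul_eq_mul] <;>
    rw [inv_mul_eq_iff_eq_mul₀ h] <;> ring

theorem sigma2_eq_sum_minors {n : ℕ} (M : Matrix (Fin n) (Fin n) ℝ) :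
    sigma2 M = (∑ i, ∑ j, (M i i * M j j - M i j * M j i)) / 2 := by
  simp only [sigma2, Matrix.trace, Matrix.diag, Matrix.mul_apply, sq, Finset.sum_mul_sum,
    ← Finset.sum_sub_distrib]

theorem exists_minor_ne_zero_of_sigma2_ne_zero {n : ℕ} {M : Matrix (Fin n) (Fin n) ℝ}
    (h : sigma2 M ≠ 0) : ∃ i j, M i i * M j j - M i j * M j i ≠ 0 := by
  by_contra! hM
  simp [sigma2_eq_sum_minors, hM] at h

theorem sigma2_neg {n : ℕ} (M : Matrix (Fin n) (Fin n) ℝ) : sigma2 (-M) = sigma2 M := by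
  simp [sigma2]

def hessian (u : E4 → ℝ) (x : E4) : Matrix (Fin 4) (Fin 4) ℝ :=
  Matrix.of fun i j => pd i (pd j u) x

theorem schouten_eq_neg_hessian {u : E4 → ℝ} {x : E4} (hx : ∀ i, pd i u x = 0) :
    schouten u x = -hessian u x := by
  ext i j
  simp [schouten, hessian, hx]

def criticalSet (u : E4 → ℝ) : Set E4 :=
  {x | ∀ i, pd i u x = 0}

theorem exists_mem_nhds_dimH_criticalSet_inter_le {u : E4 → ℝ} {x₀ : E4}
    (hu : ∀ k, ContDiffAt ℝ 1 (pd k u) x₀) (hx₀ : ∀ i, pd i u x₀ = 0)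
    (hH : sigma2 (hessian u x₀) ≠ 0) :
    ∃ W ∈ 𝓝 x₀, dimH (criticalSet u ∩ W) ≤ 2 := by
  obtain ⟨i, j, hij⟩ := exists_minor_ne_zero_of_sigma2_ne_zero hH
  have hf : HasStrictFDerivAt (fun x => (pd i u x, pd j u x))
      ((fderiv ℝ (pd i u) x₀).prod (fderiv ℝ (pd j u) x₀)) x₀ :=
    ((hu i).hasStrictFDerivAt one_ne_zero).prodMk ((hu j).hasStrictFDerivAt one_ne_zero)
  have hf' : ((fderiv ℝ (pd i u) x₀).prod (fderiv ℝ (pd j u) x₀)).range = ⊤ := by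
    rw [ContinuousLinearMap.coe_prod]
    refine LinearMap.range_prod_eq_top_of_det_ne_zero (v := EuclideanSpace.single i 1)
      (w := EuclideanSpace.single j 1) ?_
    rwa [mul_comm (hessian u x₀ i j)] at hij
  obtain ⟨W, hW, hdim⟩ := hf.exists_mem_nhds_dimH_preimage_inter_le hf'
  refine ⟨W, hW, le_trans (dimH_mono ?_) (hdim.trans (by simp))⟩
  exact Set.inter_subset_inter_left W fun x hx => by simp [hx i, hx j, hx₀ i, hx₀ j]

/-- if `σ₂(A_u) ≠ 0` on an open set `U`, then the critical set
`{∇u = 0} ∩ U` has vanishing 3- and 4-dimensional Hausdorff measure. -/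
theorem critical_set_null (U : Set E4) (hU : IsOpen U) (u : E4 → ℝ)
    (hu : ContDiffOn ℝ 2 u U)
    (h : ∀ x ∈ U, sigma2 (schouten u x) ≠ 0) :
    μH[3] {x : E4 | x ∈ U ∧ ∀ i, pd i u x = 0} = 0 ∧
    μH[4] {x : E4 | x ∈ U ∧ ∀ i, pd i u x = 0} = 0 := by
  have hpd : ∀ k, ContDiffOn ℝ 1 (pd k u) U := fun k =>
    (hu.fderiv_of_isOpen hU (by norm_num)).clm_apply contDiffOn_const
  have hdim : dimH {x : E4 | x ∈ U ∧ ∀ i, pd i u x = 0} ≤ 2 := by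
    refine dimH_le_of_forall_exists_mem_nhds fun x ⟨hxU, hcrit⟩ => ?_
    have hH : sigma2 (hessian u x) ≠ 0 := by
      simpa [schouten_eq_neg_hessian hcrit, sigma2_neg] using h x hxU
    obtain ⟨W, hW, hWdim⟩ := exists_mem_nhds_dimH_criticalSet_inter_le
      (fun k => (hpd k).contDiffAt (hU.mem_nhds hxU)) hcrit hH
    exact ⟨W, hW, (dimH_mono (Set.inter_subset_inter_left W fun y hy => hy.2)).trans hWdim⟩
  exact ⟨by simpa using hausdorffMeasure_of_dimH_lt (d := 3) (hdim.trans_lt (by norm_num)),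
    by simpa using hausdorffMeasure_of_dimH_lt (d := 4) (hdim.trans_lt (by norm_num))⟩
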